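/- Let k ≥ 2 and let u, v, w ∈ (Σ_k²)^* with |v| ≥ 1 and suppose [π₂(uv)]_k > [π₂(u)]_k (equivalently the pumped part contributes positively to the second coordinate) and [π₂(u v^i w)]_k > 0 for all i ≥ 0. Then the sequence quo_k(u v^i w) = [π₁(u v^i w)]_k/[π₂(u v^i w)]_k converges as i → ∞ to γ(u,v) := ([π₁(uv)]_k − [π₁(u)]_k)/([π₂(uv)]_k − [π₂(u)]_k), and the convergence is monotone (strictly increasing, constant, or strictly decreasing). -/

import Mathlib

/-- The base-k value of a word of digits, most significant digit first. -/
def baseVal (k : ℕ) (w : List (Fin k)) : ℕ :=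
  w.foldl (fun acc d => acc * k + d.val) 0

/-- The quotient of the base-k values of the two coordinates of a word over Σ_k². -/
noncomputable def quoVal (k : ℕ) (x : List (Fin k × Fin k)) : ℝ :=
  (baseVal k (x.map Prod.fst) : ℝ) / (baseVal k (x.map Prod.snd) : ℝ)

/-!
Write `K = k ^ |v|`. Reading `u v^i w` digit by digit, its value on either coordinate is, up to
the common factor `K - 1`, an affine function `a K^i + b` of `K^i`, where the leading
coefficient `a` is `k^|w|` times the increment `[π(uv)]_k - [π(u)]_k`. Hence the quotient is
a fractional linear function `(a₁ t + b₁) / (a₂ t + b₂)` evaluated along `t = K^i`, which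
increases to infinity. Such a function tends to `a₁ / a₂` as `t → ∞`, and on a region where its
denominator stays positive it is strictly increasing, constant or strictly decreasing according
to the sign of `a₁ b₂ - b₁ a₂`.
-/

open Filter Topology

section FractionalLinear

variable {a b c d : ℝ}

theorem div_affine_sub_div_affine (s t : ℝ) (hs : c * s + d ≠ 0) (ht : c * t + d ≠ 0) :
    (a * s + b) / (c * s + d) - (a * t + b) / (c * t + d)
      = (a * d - b * c) * (s - t) / ((c * s + d) * (c * t + d)) := by
  rw [div_sub_div _ _ hs ht]
  ring

theorem Filter.Tendsto.div_affine_atTop {α : Type*} {l : Filter α} {g : α → ℝ}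
    (hg : Tendsto g l atTop) (hc : c ≠ 0) :
    Tendsto (fun x => (a * g x + b) / (c * g x + d)) l (𝓝 (a / c)) := by
  have hinv := hg.inv_tendsto_atTop
  have hlim : Tendsto (fun x => (a + b * (g x)⁻¹) / (c + d * (g x)⁻¹)) l
      (𝓝 ((a + b * 0) / (c + d * 0))) :=
    (tendsto_const_nhds.add (hinv.const_mul b)).div
      (tendsto_const_nhds.add (hinv.const_mul d)) (by simpa using hc)
  rw [mul_zero, add_zero, mul_zero, add_zero] at hlim
  refine hlim.congr' ((hg.eventually_gt_atTop 0).mono fun x hx => ?_)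
  rw [← mul_div_mul_right _ _ hx.ne']
  field_simp

variable {α : Type*} [Preorder α] {g : α → ℝ}

theorem StrictMono.div_affine_trichotomy (hg : StrictMono g) (hpos : ∀ x, 0 < c * g x + d) :
    StrictMono (fun x => (a * g x + b) / (c * g x + d)) ∨
      (∀ x y, (a * g x + b) / (c * g x + d) = (a * g y + b) / (c * g y + d)) ∨
      StrictAnti (fun x => (a * g x + b) / (c * g x + d)) := by
  have hdiff := fun x y => div_affine_sub_div_affine (a := a) (b := b) (g y) (g x)
    (hpos y).ne' (hpos x).ne'
  rcases lt_trichotomy (a * d - b * c) 0 with hΔneg | hΔzero | hΔpos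
  · refine Or.inr (Or.inr fun x y hxy => sub_neg.1 ?_)
    rw [hdiff]
    exact div_neg_of_neg_of_pos (mul_neg_of_neg_of_pos hΔneg (sub_pos.2 (hg hxy)))
      (mul_pos (hpos y) (hpos x))
  · refine Or.inr (Or.inl fun x y => (sub_eq_zero.1 ?_).symm)
    rw [hdiff, hΔzero, zero_mul, zero_div]
  · refine Or.inl fun x y hxy => sub_pos.1 ?_
    rw [hdiff]
    exact div_pos (mul_pos hΔpos (sub_pos.2 (hg hxy))) (mul_pos (hpos y) (hpos x))

end FractionalLinear

section BaseValue

variable {k : ℕ}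

theorem baseVal_foldl (a : ℕ) (x : List (Fin k)) :
    x.foldl (fun acc d => acc * k + d.val) a = a * k ^ x.length + baseVal k x := by
  induction x generalizing a with
  | nil => simp [baseVal]
  | cons d t ih =>
      simp only [List.foldl_cons, List.length_cons, baseVal]
      rw [ih, ih (0 * k + d.val)]
      ring

theorem baseVal_append (x y : List (Fin k)) :
    baseVal k (x ++ y) = baseVal k x * k ^ y.length + baseVal k y := by
  rw [baseVal, List.foldl_append]
  exact baseVal_foldl _ y

theorem baseVal_append_real (x y : List (Fin k)) :
    (baseVal k (x ++ y) : ℝ) = baseVal k x * (k : ℝ) ^ y.length + baseVal k y := by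
  exact_mod_cast baseVal_append x y

theorem baseVal_append_flatten_replicate_mul (x y : List (Fin k)) (i : ℕ) :
    (baseVal k (x ++ (List.replicate i y).flatten) : ℝ) * ((k : ℝ) ^ y.length - 1)
      = ((baseVal k (x ++ y) : ℝ) - baseVal k x) * ((k : ℝ) ^ y.length) ^ i
        - baseVal k y := by
  induction i with
  | zero =>
      rw [List.replicate_zero, List.flatten_nil, List.append_nil, baseVal_append_real]
      ring
  | succ i ih =>
      rw [List.replicate_succ', List.flatten_append, List.flatten_singleton,
        ← List.append_assoc, baseVal_append_real, baseVal_append_real x y]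
      rw [baseVal_append_real x y] at ih
      linear_combination (k : ℝ) ^ y.length * ih

theorem baseVal_pumped_mul (x y z : List (Fin k)) (i : ℕ) :
    (baseVal k (x ++ (List.replicate i y).flatten ++ z) : ℝ) * ((k : ℝ) ^ y.length - 1)
      = (k : ℝ) ^ z.length * ((baseVal k (x ++ y) : ℝ) - baseVal k x)
            * ((k : ℝ) ^ y.length) ^ i
        + (((k : ℝ) ^ y.length - 1) * baseVal k z - (k : ℝ) ^ z.length * baseVal k y) := by
  rw [baseVal_append_real _ z]
  linear_combination (k : ℝ) ^ z.length * baseVal_append_flatten_replicate_mul x y i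

theorem baseVal_map_pumped_mul {α : Type*} (p : α → Fin k) (x y z : List α) (i : ℕ) :
    (baseVal k ((x ++ (List.replicate i y).flatten ++ z).map p) : ℝ) * ((k : ℝ) ^ y.length - 1)
      = (k : ℝ) ^ z.length * ((baseVal k ((x ++ y).map p) : ℝ) - baseVal k (x.map p))
            * ((k : ℝ) ^ y.length) ^ i
        + (((k : ℝ) ^ y.length - 1) * baseVal k (z.map p)
          - (k : ℝ) ^ z.length * baseVal k (y.map p)) := by
  have h := baseVal_pumped_mul (x.map p) (y.map p) (z.map p) i
  rwa [List.length_map, List.length_map, ← List.map_replicate, ← List.map_flatten,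
    ← List.map_append, ← List.map_append, ← List.map_append] at h

end BaseValue

theorem pumped_word_quotient_tendsto_gamma (k : ℕ) (hk : 2 ≤ k)
    (u v w : List (Fin k × Fin k)) (hv : 1 ≤ v.length)
    (h2 : baseVal k (u.map Prod.snd) < baseVal k ((u ++ v).map Prod.snd))
    (hpos : ∀ i : ℕ, 0 < baseVal k ((u ++ (List.replicate i v).flatten ++ w).map Prod.snd)) :
    Filter.Tendsto (fun i => quoVal k (u ++ (List.replicate i v).flatten ++ w))
      Filter.atTop
      (nhds (((baseVal k ((u ++ v).map Prod.fst) : ℝ) - (baseVal k (u.map Prod.fst) : ℝ)) /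
        ((baseVal k ((u ++ v).map Prod.snd) : ℝ) - (baseVal k (u.map Prod.snd) : ℝ)))) ∧
    (StrictMono (fun i => quoVal k (u ++ (List.replicate i v).flatten ++ w)) ∨
     (∀ i j : ℕ, quoVal k (u ++ (List.replicate i v).flatten ++ w) =
        quoVal k (u ++ (List.replicate j v).flatten ++ w)) ∨
     StrictAnti (fun i => quoVal k (u ++ (List.replicate i v).flatten ++ w))) := by
  have hK : 1 < (k : ℝ) ^ v.length := one_lt_pow₀ (by exact_mod_cast hk) (by omega)
  have hquo : ∀ i, quoVal k (u ++ (List.replicate i v).flatten ++ w) = _ := fun i => by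
    rw [quoVal, ← mul_div_mul_right _ _ (sub_pos.2 hK).ne',
      baseVal_map_pumped_mul, baseVal_map_pumped_mul]
  simp only [hquo]
  have hlead : 0 < (k : ℝ) ^ w.length
      * ((baseVal k ((u ++ v).map Prod.snd) : ℝ) - baseVal k (u.map Prod.snd)) :=
    mul_pos (by positivity) (sub_pos.2 (by exact_mod_cast h2))
  refine ⟨?_, (pow_right_strictMono₀ hK).div_affine_trichotomy fun i => ?_⟩
  · rw [← mul_div_mul_left _ _ (by positivity : (k : ℝ) ^ w.length ≠ 0)]
    exact (tendsto_pow_atTop_atTop_of_one_lt hK).div_affine_atTop hlead.ne'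
  · rw [← baseVal_map_pumped_mul]
    exact mul_pos (by exact_mod_cast hpos i) (sub_pos.2 hK)
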